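/- arXiv:2412.12467 — 6 statements merged into one kernel-verified Lean document; each statement's English description precedes it below -/
import Mathlib

section
/- Let n be a natural number and let β : Fin n → ℝ satisfy |β i| ≤ 2√2 for every i. Then ∑_i β_i + 0.2456 · ∑_i (β_i² − 4) + 0.0887 · ∑_i (β_i³ − 6 β_i) + 0.0295 · ∑_i (β_i⁴ − 8 β_i² + 8) ≥ 1.1691 · n − 1.9169 · log(∏_i (3 − β_i)), where log denotes the natural logarithm. -/
/-!
The inequality is a sum over `i` of the one-variable inequality
`1.1691 ≤ weightedTrace x + 1.9169 * log (3 - x)` on `|x| ≤ 2√2`. That inequality is tight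
(the margin at `x = 2√2` is about `5 * 10⁻⁴`), so it is checked piecewise: on each of seven
intervals, `log (3 - x)` is bounded below by its tangent `log c + 1 - c / (3 - x)` at a point
`c = 2^a 3^b 5^d`, whose logarithm is known to ten digits from `log 2`, `log 3`, `log 5`;
clearing the denominator leaves a polynomial inequality on the interval, which follows from the
nonnegativity of its Bernstein coefficients.
-/

open Real Finset

noncomputable def weightedTrace (x : ℝ) : ℝ :=
  x + 0.2456 * (x ^ 2 - 4) + 0.0887 * (x ^ 3 - 6 * x) + 0.0295 * (x ^ 4 - 8 * x ^ 2 + 8)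

-- The constants are the centres of `log_two_near_10`, `log_three_near_10`, `log_five_near_10`.
noncomputable def logLowerBound (a b d : ℤ) : ℝ :=
  a * (287209 / 414355) + b * (109861228867 / 100000000000) + d * (160943791243 / 100000000000)
    - (|(a : ℝ)| + |(b : ℝ)| + |(d : ℝ)|) / 10 ^ 10

lemma log_two_pow_mul_three_pow_mul_five_pow (a b d : ℤ) :
    log ((2 : ℝ) ^ a * 3 ^ b * 5 ^ d) = a * log 2 + b * log 3 + d * log 5 := by
  rw [log_mul (by positivity) (by positivity), log_mul (by positivity) (by positivity),
    log_zpow, log_zpow, log_zpow]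

lemma mul_sub_abs_mul_le_mul {k l r ε : ℝ} (h : |l - r| ≤ ε) :
    k * r - |k| * ε ≤ k * l := by
  have : |k * l - k * r| ≤ |k| * ε := by
    rw [← mul_sub, abs_mul]
    exact mul_le_mul_of_nonneg_left h (abs_nonneg k)
  linarith [neg_abs_le (k * l - k * r)]

lemma logLowerBound_le (a b d : ℤ) :
    logLowerBound a b d ≤ log ((2 : ℝ) ^ a * 3 ^ b * 5 ^ d) := by
  rw [log_two_pow_mul_three_pow_mul_five_pow, logLowerBound]
  linarith [mul_sub_abs_mul_le_mul (k := a) log_two_near_10,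
    mul_sub_abs_mul_le_mul (k := b) log_three_near_10,
    mul_sub_abs_mul_le_mul (k := d) log_five_near_10]

lemma log_add_one_sub_div_le_log {c y : ℝ} (hc : 0 < c) (hy : 0 < y) :
    log c + 1 - c / y ≤ log y := by
  have := log_le_sub_one_of_pos (div_pos hc hy)
  rw [log_div hc.ne' hy.ne'] at this
  linarith

lemma le_weightedTrace_add_log_of_le_mul (a b d : ℤ) {x : ℝ} (hx : x < 3)
    (h : 1.9169 * ((2 : ℝ) ^ a * 3 ^ b * 5 ^ d)
      ≤ (3 - x) * (weightedTrace x - 1.1691 + 1.9169 * (logLowerBound a b d + 1))) :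
    1.1691 ≤ weightedTrace x + 1.9169 * log (3 - x) := by
  have h3 : 0 < 3 - x := by linarith
  have htan := log_add_one_sub_div_le_log (c := (2 : ℝ) ^ a * 3 ^ b * 5 ^ d) (by positivity) h3
  have hdiv : 1.9169 * ((2 : ℝ) ^ a * 3 ^ b * 5 ^ d) / (3 - x)
      ≤ weightedTrace x - 1.1691 + 1.9169 * (logLowerBound a b d + 1) := by
    rw [div_le_iff₀ h3]; linarith
  rw [mul_div_assoc] at hdiv
  linarith [logLowerBound_le a b d]

lemma sub_pow_mul_sub_pow_nonneg {a b x : ℝ} (ha : a ≤ x) (hb : x ≤ b) (i j : ℕ) :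
    0 ≤ (x - a) ^ i * (b - x) ^ j :=
  mul_nonneg (pow_nonneg (sub_nonneg.mpr ha) i) (pow_nonneg (sub_nonneg.mpr hb) j)

lemma le_weightedTrace_add_log {x : ℝ} (hx : |x| ≤ 2.82843) :
    1.1691 ≤ weightedTrace x + 1.9169 * log (3 - x) := by
  obtain ⟨hlo, hhi⟩ := abs_le.mp hx
  rcases le_total x (-2.3) with h1 | h1
  · refine le_weightedTrace_add_log_of_le_mul 0 3 (-1) (by linarith) ?_
    norm_num [weightedTrace, logLowerBound]
    linarith [sub_pow_mul_sub_pow_nonneg hlo h1 0 7, sub_pow_mul_sub_pow_nonneg hlo h1 1 6,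
      sub_pow_mul_sub_pow_nonneg hlo h1 2 5, sub_pow_mul_sub_pow_nonneg hlo h1 3 4,
      sub_pow_mul_sub_pow_nonneg hlo h1 4 3, sub_pow_mul_sub_pow_nonneg hlo h1 5 2,
      sub_pow_mul_sub_pow_nonneg hlo h1 6 1, sub_pow_mul_sub_pow_nonneg hlo h1 7 0]
  rcases le_total x (-0.25) with h2 | h2
  · refine le_weightedTrace_add_log_of_le_mul (-4) 4 0 (by linarith) ?_
    norm_num [weightedTrace, logLowerBound]
    linarith [sub_pow_mul_sub_pow_nonneg h1 h2 0 5, sub_pow_mul_sub_pow_nonneg h1 h2 1 4,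
      sub_pow_mul_sub_pow_nonneg h1 h2 2 3, sub_pow_mul_sub_pow_nonneg h1 h2 3 2,
      sub_pow_mul_sub_pow_nonneg h1 h2 4 1, sub_pow_mul_sub_pow_nonneg h1 h2 5 0]
  rcases le_total x 1.1 with h3 | h3
  · refine le_weightedTrace_add_log_of_le_mul 4 1 (-2) (by linarith) ?_
    norm_num [weightedTrace, logLowerBound]
    linarith [sub_pow_mul_sub_pow_nonneg h2 h3 0 5, sub_pow_mul_sub_pow_nonneg h2 h3 1 4,
      sub_pow_mul_sub_pow_nonneg h2 h3 2 3, sub_pow_mul_sub_pow_nonneg h2 h3 3 2,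
      sub_pow_mul_sub_pow_nonneg h2 h3 4 1, sub_pow_mul_sub_pow_nonneg h2 h3 5 0]
  rcases le_total x 1.4 with h4 | h4
  · refine le_weightedTrace_add_log_of_le_mul (-6) (-3) 5 (by linarith) ?_
    norm_num [weightedTrace, logLowerBound]
    linarith [sub_pow_mul_sub_pow_nonneg h3 h4 0 5, sub_pow_mul_sub_pow_nonneg h3 h4 1 4,
      sub_pow_mul_sub_pow_nonneg h3 h4 2 3, sub_pow_mul_sub_pow_nonneg h3 h4 3 2,
      sub_pow_mul_sub_pow_nonneg h3 h4 4 1, sub_pow_mul_sub_pow_nonneg h3 h4 5 0]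
  rcases le_total x 2.1 with h5 | h5
  · refine le_weightedTrace_add_log_of_le_mul (-1) 1 0 (by linarith) ?_
    norm_num [weightedTrace, logLowerBound]
    linarith [sub_pow_mul_sub_pow_nonneg h4 h5 0 5, sub_pow_mul_sub_pow_nonneg h4 h5 1 4,
      sub_pow_mul_sub_pow_nonneg h4 h5 2 3, sub_pow_mul_sub_pow_nonneg h4 h5 3 2,
      sub_pow_mul_sub_pow_nonneg h4 h5 4 1, sub_pow_mul_sub_pow_nonneg h4 h5 5 0]
  rcases le_total x 2.7 with h6 | h6
  · refine le_weightedTrace_add_log_of_le_mul (-1) 0 0 (by linarith) ?_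
    norm_num [weightedTrace, logLowerBound]
    linarith [sub_pow_mul_sub_pow_nonneg h5 h6 0 5, sub_pow_mul_sub_pow_nonneg h5 h6 1 4,
      sub_pow_mul_sub_pow_nonneg h5 h6 2 3, sub_pow_mul_sub_pow_nonneg h5 h6 3 2,
      sub_pow_mul_sub_pow_nonneg h5 h6 4 1, sub_pow_mul_sub_pow_nonneg h5 h6 5 0]
  refine le_weightedTrace_add_log_of_le_mul (-4) (-2) 2 (by linarith) ?_
  norm_num [weightedTrace, logLowerBound]
  linarith [sub_pow_mul_sub_pow_nonneg h6 hhi 0 5, sub_pow_mul_sub_pow_nonneg h6 hhi 1 4,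
    sub_pow_mul_sub_pow_nonneg h6 hhi 2 3, sub_pow_mul_sub_pow_nonneg h6 hhi 3 2,
    sub_pow_mul_sub_pow_nonneg h6 hhi 4 1, sub_pow_mul_sub_pow_nonneg h6 hhi 5 0]

lemma two_mul_sqrt_two_lt : 2 * √2 < 2.82843 := by
  nlinarith [sq_sqrt (show (0 : ℝ) ≤ 2 by norm_num), sqrt_nonneg 2]

/-- Lemma 2.2 of the paper, in terms of the real parts `β i` of the Frobenius
eigenvalue pairs of an abelian variety over `F₂`. -/
theorem stmt_0 (n : ℕ) (β : Fin n → ℝ) (hβ : ∀ i, |β i| ≤ 2 * Real.sqrt 2) :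
    (∑ i, β i) + 0.2456 * (∑ i, (β i ^ 2 - 4)) + 0.0887 * (∑ i, (β i ^ 3 - 6 * β i))
      + 0.0295 * (∑ i, (β i ^ 4 - 8 * β i ^ 2 + 8))
    ≥ 1.1691 * n - 1.9169 * Real.log (∏ i, (3 - β i)) := by
  have hpos : ∀ i ∈ univ, 3 - β i ≠ 0 := fun i _ =>
    (show 0 < 3 - β i by linarith [le_abs_self (β i), hβ i, two_mul_sqrt_two_lt]).ne'
  have hsum : ∑ i, (1.1691 - 1.9169 * log (3 - β i)) ≤ ∑ i, weightedTrace (β i) :=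
    sum_le_sum fun i _ => by
      linarith [le_weightedTrace_add_log ((hβ i).trans two_mul_sqrt_two_lt.le)]
  rw [log_prod hpos]
  simp only [weightedTrace, sum_add_distrib, sum_sub_distrib, ← mul_sum, sum_const, card_univ,
    Fintype.card_fin, nsmul_eq_mul] at hsum ⊢
  linarith
end

section
/- For every real number x with −2√2 ≤ x ≤ 2√2, one has x + 0.2456 (x² − 4) + 0.0887 (x³ − 6x) + 0.0295 (x⁴ − 8x² + 8) ≥ 1.1691 − 1.9169 · log(3 − x), and moreover the left-hand side exceeds the right-hand side by at least 0.0004. Here log denotes the natural logarithm. -/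
/-!
Put `t = 3 - x ∈ [3 - 2√2, 3 + 2√2]` and split this range into six intervals `[a, b]`. On each,
`log t + t² / (2b²)` is concave (its derivative `1/t + t/b²` decreases for `t ≤ b`), so `log t` lies
above its secant through `a` and `b` by at least `(b - a)(t - a)(b - t) / (2b²)`. The values
`log a`, `log b` are bounded below through a Taylor bound for `exp`, and what is left on each
interval is a quartic polynomial inequality in `x`.
-/

open Real Finset Set

theorem le_log_of_taylor_sq_le {c a : ℝ} {n : ℕ} (hc : |c| ≤ 2) (hn : 0 < n)
    (h : (∑ m ∈ range n, (c / 2) ^ m / m.factorial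
      + |c / 2| ^ n * (n.succ / (n.factorial * n))) ^ 2 ≤ a) :
    c ≤ log a := by
  have hc2 : |c / 2| ≤ 1 := by rw [abs_div, abs_two]; linarith
  have hexp := (abs_sub_le_iff.mp (exp_bound hc2 hn)).1
  have hle : exp c ≤ a :=
    calc exp c = exp (c / 2) ^ 2 := by rw [← exp_nat_mul]; ring_nf
      _ ≤ _ := pow_le_pow_left₀ (exp_pos _).le (by linarith) 2
      _ ≤ a := h
  rwa [le_log_iff_exp_le ((exp_pos c).trans_le hle)]

theorem ConcaveOn.mul_secant_le {s : Set ℝ} {f : ℝ → ℝ} (hf : ConcaveOn ℝ s f)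
    {a b t : ℝ} (ha : a ∈ s) (hb : b ∈ s) (hat : a ≤ t) (htb : t ≤ b) :
    (b - t) * f a + (t - a) * f b ≤ (b - a) * f t := by
  rcases hat.eq_or_lt with rfl | hat
  · ring_nf; rfl
  rcases htb.eq_or_lt with rfl | htb
  · ring_nf; rfl
  have h := hf.neg.secant_mono_aux1 ha hb hat htb
  simp only [Pi.neg_apply] at h
  linarith

theorem ConcaveOn.mul_secant_add_le {s : Set ℝ} {f : ℝ → ℝ} {κ : ℝ}
    (hf : ConcaveOn ℝ s fun t ↦ f t + κ * t ^ 2)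
    {a b t : ℝ} (ha : a ∈ s) (hb : b ∈ s) (hat : a ≤ t) (htb : t ≤ b) :
    (b - t) * f a + (t - a) * f b + κ * (b - a) * (t - a) * (b - t) ≤ (b - a) * f t := by
  linarith [hf.mul_secant_le ha hb hat htb]

theorem concaveOn_log_add_sq (b : ℝ) :
    ConcaveOn ℝ (Ioc 0 b) fun t ↦ log t + 1 / (2 * b ^ 2) * t ^ 2 := by
  have hderiv : ∀ t ∈ Ioo 0 b,
      deriv (fun t ↦ log t + 1 / (2 * b ^ 2) * t ^ 2) t = t⁻¹ + t / b ^ 2 := by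
    intro t ht
    refine HasDerivAt.deriv (((hasDerivAt_log ht.1.ne').add
      ((hasDerivAt_pow 2 t).const_mul (1 / (2 * b ^ 2)))).congr_deriv ?_)
    push_cast
    ring
  refine AntitoneOn.concaveOn_of_deriv (convex_Ioc 0 b) ?_ ?_ ?_
  · exact (continuousOn_log.mono fun t ht ↦ ht.1.ne').add (by fun_prop)
  · rw [interior_Ioc]
    intro t ht
    exact ((differentiableAt_log ht.1.ne').add (by fun_prop)).differentiableWithinAt
  · rw [interior_Ioc]
    intro s hs t ht hst
    rw [hderiv s hs, hderiv t ht]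
    have hslope : (t - s) / b ^ 2 ≤ (t - s) / (s * t) :=
      div_le_div_of_nonneg_left (sub_nonneg.2 hst) (mul_pos hs.1 ht.1)
        (by nlinarith [hs.1, ht.1, ht.2, hs.2])
    have hinv : s⁻¹ - t⁻¹ = (t - s) / (s * t) := by field_simp [hs.1.ne', ht.1.ne']
    have hlin : t / b ^ 2 - s / b ^ 2 = (t - s) / b ^ 2 := by ring
    linarith

theorem mul_secant_add_le_log {a b t : ℝ} (ha : 0 < a) (hat : a ≤ t) (htb : t ≤ b) :
    (b - t) * log a + (t - a) * log b + (b - a) * (t - a) * (b - t) / (2 * b ^ 2)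
      ≤ (b - a) * log t := by
  have hab := hat.trans htb
  have h := (concaveOn_log_add_sq b).mul_secant_add_le ⟨ha, hab⟩ ⟨ha.trans_le hab, le_rfl⟩
    hat htb
  linarith [show 1 / (2 * b ^ 2) * (b - a) * (t - a) * (b - t)
    = (b - a) * (t - a) * (b - t) / (2 * b ^ 2) by ring]

-- In terms of Chebyshev polynomials, `x² - 4 = 4 T₂(y)`, `x³ - 6x = 4√2 T₃(y)` and
-- `x⁴ - 8x² + 8 = 8 T₄(y)` with `y = x / (2√2)`.
def chebyshevSum (x : ℝ) : ℝ :=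
  x + 0.2456 * (x ^ 2 - 4) + 0.0887 * (x ^ 3 - 6 * x) + 0.0295 * (x ^ 4 - 8 * x ^ 2 + 8)

theorem margin_ge_of_secant {x a b ca cb : ℝ} (ha : 0 < a) (hab : a < b)
    (hca : ca ≤ log a) (hcb : cb ≤ log b) (hxa : a ≤ 3 - x) (hxb : 3 - x ≤ b)
    (hpoly : 0.0004 * (b - a) ≤ (b - a) * (chebyshevSum x - 1.1691) + 1.9169 *
      ((b - (3 - x)) * ca + (3 - x - a) * cb
        + (b - a) * (3 - x - a) * (b - (3 - x)) / (2 * b ^ 2))) :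
    0.0004 ≤ chebyshevSum x - (1.1691 - 1.9169 * log (3 - x)) := by
  have hsecant := mul_secant_add_le_log ha hxa hxb
  have hca' := mul_le_mul_of_nonneg_left hca (sub_nonneg.2 hxb)
  have hcb' := mul_le_mul_of_nonneg_left hcb (sub_nonneg.2 hxa)
  refine le_of_mul_le_mul_left ?_ (sub_pos.2 hab)
  linarith

theorem log_node_bounds :
    (-1.762764 : ℝ) ≤ log 0.17157 ∧ (-0.16252 : ℝ) ≤ log 0.85 ∧ (0.53062 : ℝ) ≤ log 1.7 ∧
      (0.61518 : ℝ) ≤ log 1.85 ∧ (0.87546 : ℝ) ≤ log 2.4 ∧ (1.6677 : ℝ) ≤ log 5.3 ∧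
      (1.76275 : ℝ) ≤ log 5.8285 := by
  refine ⟨?_, ?_, ?_, ?_, ?_, ?_, ?_⟩ <;>
  · refine le_log_of_taylor_sq_le (n := 10) (by norm_num [abs_le]) (by norm_num) ?_
    norm_num [Finset.sum_range_succ, Nat.factorial]

theorem margin_ge {x : ℝ} (hlo : -2.8285 ≤ x) (hhi : x ≤ 2.82843) :
    0.0004 ≤ chebyshevSum x - (1.1691 - 1.9169 * log (3 - x)) := by
  obtain ⟨h0, h1, h2, h3, h4, h5, h6⟩ := log_node_bounds
  -- On `lo ≤ x ≤ hi` each quartic is a nonnegative combination of the listed products of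
  -- `x - lo`, `hi - x` and `(x - m)²`, with `m` near its minimum.
  rcases le_total 2.15 x with hx | hx
  · have hl := sub_nonneg.2 hx; have hh := sub_nonneg.2 hhi
    refine margin_ge_of_secant (by norm_num) (by norm_num) h0 h1 (by linarith) (by linarith) ?_
    unfold chebyshevSum; ring_nf
    linarith [pow_nonneg hh 2, pow_nonneg hh 4, mul_nonneg hl (pow_nonneg hh 2)]
  rcases le_total 1.3 x with hx' | hx'
  · have hl := sub_nonneg.2 hx'; have hh := sub_nonneg.2 hx
    refine margin_ge_of_secant (by norm_num) (by norm_num) h1 h2 (by linarith) (by linarith) ?_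
    unfold chebyshevSum; ring_nf
    linarith [pow_nonneg hh 4, pow_nonneg hl 4, sq_nonneg (x - 1.41),
      mul_nonneg (mul_nonneg hl hh) (sq_nonneg (x - 1.41))]
  rcases le_total 1.15 x with hx | hx
  · have hl := sub_nonneg.2 hx; have hh := sub_nonneg.2 hx'
    refine margin_ge_of_secant (by norm_num) (by norm_num) h2 h3 (by linarith) (by linarith) ?_
    unfold chebyshevSum; ring_nf
    linarith [pow_nonneg hh 4, pow_nonneg hl 3, sq_nonneg (x - 1.18)]
  rcases le_total 0.6 x with hx' | hx'
  · have hl := sub_nonneg.2 hx'; have hh := sub_nonneg.2 hx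
    refine margin_ge_of_secant (by norm_num) (by norm_num) h3 h4 (by linarith) (by linarith) ?_
    unfold chebyshevSum; ring_nf
    linarith [pow_nonneg hh 4, sq_nonneg (x - 1.12), mul_nonneg hl (sq_nonneg (x - 1.12))]
  rcases le_total (-2.3) x with hx | hx
  · have hl := sub_nonneg.2 hx; have hh := sub_nonneg.2 hx'
    refine margin_ge_of_secant (by norm_num) (by norm_num) h4 h5 (by linarith) (by linarith) ?_
    unfold chebyshevSum; ring_nf
    linarith [pow_nonneg hh 2, pow_nonneg hl 3, mul_nonneg (pow_nonneg hl 3) hh,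
      mul_nonneg (pow_nonneg hh 2) (sq_nonneg (x + 2.25))]
  · have hl := sub_nonneg.2 hlo; have hh := sub_nonneg.2 hx
    refine margin_ge_of_secant (by norm_num) (by norm_num) h5 h6 (by linarith) (by linarith) ?_
    unfold chebyshevSum; ring_nf
    linarith [pow_nonneg hh 3, pow_nonneg hh 4, sq_nonneg (x + 2.36)]

/-- The pointwise inequality (2.7) underlying Lemma 2.2 of the paper, together
with the stated margin of at least `0.0004`. -/
theorem stmt_1 (x : ℝ) (h1 : -(2 * Real.sqrt 2) ≤ x) (h2 : x ≤ 2 * Real.sqrt 2) :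
    x + 0.2456 * (x ^ 2 - 4) + 0.0887 * (x ^ 3 - 6 * x) + 0.0295 * (x ^ 4 - 8 * x ^ 2 + 8)
      ≥ 1.1691 - 1.9169 * Real.log (3 - x) ∧
    x + 0.2456 * (x ^ 2 - 4) + 0.0887 * (x ^ 3 - 6 * x) + 0.0295 * (x ^ 4 - 8 * x ^ 2 + 8)
      - (1.1691 - 1.9169 * Real.log (3 - x)) ≥ 0.0004 := by
  have hsqrt : √2 < 1.414215 := (sqrt_lt' (by norm_num)).2 (by norm_num)
  have h := margin_ge (x := x) (by linarith) (by linarith)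
  unfold chebyshevSum at h
  exact ⟨by linarith, h⟩
end

section
/- Let ℓ be an odd prime, let P be a polynomial with integer coefficients, let ζ ∈ ℂ be a primitive ℓ-th root of unity, and let k be an integer such that (k : ℂ) = ∏_{j=1}^{ℓ−1} P(ζ^j) (where P is evaluated in ℂ via the inclusion ℤ → ℂ). Then k ≡ 0 (mod ℓ) or k ≡ 1 (mod ℓ). -/
open Finset Polynomial

/-- The algebraic kernel of Lemmas 2.5 and 2.10 of the paper: an integer which is
the product of the values of an integer polynomial at all nontrivial `ℓ`-th roots
of unity (a norm from `ℚ(ζ_ℓ)`) is congruent to `0` or `1` modulo the odd prime `ℓ`. -/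
theorem stmt_2 (ℓ : ℕ) (hℓ : ℓ.Prime) (hodd : Odd ℓ) (P : Polynomial ℤ) (ζ : ℂ)
    (hζ : IsPrimitiveRoot ζ ℓ) (k : ℤ)
    (hk : (k : ℂ) = ∏ j ∈ Finset.Icc 1 (ℓ - 1), Polynomial.aeval (ζ ^ j) P) :
    ((k : ZMod ℓ) = 0) ∨ ((k : ZMod ℓ) = 1) := by
  have hpos : 0 < ℓ := hℓ.pos
  set N : Polynomial ℤ := ∏ j ∈ Finset.Icc 1 (ℓ - 1), P.comp (X ^ j) with hN
  have hint : IsIntegral ℤ ζ := by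
    refine ⟨X ^ ℓ - 1, monic_X_pow_sub_C 1 hℓ.ne_zero, ?_⟩
    simp [hζ.pow_eq_one]
  haveI : Fact ℓ.Prime := ⟨hℓ⟩
  have haev : aeval ζ (N - C k) = 0 := by
    rw [map_sub, aeval_C, hN, map_prod, sub_eq_zero]
    simp only [algebraMap_int_eq, eq_intCast]
    rw [hk]
    refine Finset.prod_congr rfl fun j _ => ?_
    rw [aeval_comp, map_pow, aeval_X]
  have hmin : minpoly ℤ ζ ∣ N - C k :=
    minpoly.isIntegrallyClosed_dvd hint haev
  have hcyc : cyclotomic ℓ ℤ = minpoly ℤ ζ :=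
    cyclotomic_eq_minpoly hζ hpos
  rw [← hcyc] at hmin
  obtain ⟨S, hS⟩ := hmin
  have heval : N.eval 1 - k = ℓ * S.eval 1 := by
    have := congrArg (Polynomial.eval 1) hS
    simpa [eval_one_cyclotomic_prime] using this
  have hNe : N.eval 1 = P.eval 1 ^ (ℓ - 1) := by
    rw [hN, eval_prod]
    calc ∏ j ∈ Finset.Icc 1 (ℓ - 1), (P.comp (X ^ j)).eval 1
        = ∏ j ∈ Finset.Icc 1 (ℓ - 1), P.eval 1 :=
          Finset.prod_congr rfl fun j _ => by simp [eval_comp]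
      _ = P.eval 1 ^ (ℓ - 1) := by simp [Nat.card_Icc]
  have hcong : (k : ZMod ℓ) = ((P.eval 1 : ℤ) : ZMod ℓ) ^ (ℓ - 1) := by
    have : ((N.eval 1 - k : ℤ) : ZMod ℓ) = 0 := by
      rw [heval]; push_cast; simp
    rw [sub_eq_iff_eq_add] at heval
    have := congrArg (fun z : ℤ => (z : ZMod ℓ)) heval
    rw [hNe] at this
    push_cast at this
    rw [this]
    simp [ZMod.natCast_self]
  by_cases h0 : ((P.eval 1 : ℤ) : ZMod ℓ) = 0
  · left
    rw [hcong, h0, zero_pow]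
    have := hℓ.two_le
    omega
  · right
    rw [hcong, ZMod.pow_card_sub_one_eq_one h0]
end

section
/- Let q be a real number with q > 4, let d be a natural number with d ≥ 2, let n be a natural number, and let α : Fin n → ℂ satisfy ‖α i‖ = √q for all i. Let m be a positive real number such that ∏_i ‖1 − (α i)^d‖ = m · ∏_i ‖1 − α i‖. Then ((q^{d/2} − 1)/(√q + 1))^n ≤ m. -/
open Real Finset

/-- Lemma 3.5 of the paper, in terms of the Frobenius eigenvalues `α i` of an
abelian variety over `F_q`. -/
theorem stmt_4 (q : ℝ) (hq : q > 4) (d : ℕ) (hd : 2 ≤ d) (n : ℕ) (α : Fin n → ℂ)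
    (hα : ∀ i, ‖α i‖ = Real.sqrt q) (m : ℝ) (hm : 0 < m)
    (h : (∏ i, ‖1 - (α i) ^ d‖) = m * ∏ i, ‖1 - α i‖) :
    ((q ^ ((d : ℝ) / 2) - 1) / (Real.sqrt q + 1)) ^ n ≤ m := by
  have hq0 : (0:ℝ) < q := by linarith
  have hsq : 2 < Real.sqrt q := by
    have : Real.sqrt 4 < Real.sqrt q := Real.sqrt_lt_sqrt (by norm_num) hq
    have h4 : Real.sqrt 4 = 2 := by
      rw [show (4:ℝ) = 2^2 by norm_num, Real.sqrt_sq (by norm_num)]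
    linarith
  set c : ℝ := (q ^ ((d:ℝ)/2) - 1) / (Real.sqrt q + 1) with hc
  have hpow : q ^ ((d:ℝ)/2) = Real.sqrt q ^ d := by
    rw [Real.sqrt_eq_rpow, ← Real.rpow_natCast (q ^ ((1:ℝ)/2)) d,
      ← Real.rpow_mul hq0.le]
    ring_nf
  have hqd1 : 1 ≤ q ^ ((d:ℝ)/2) := by
    rw [hpow]
    exact one_le_pow₀ (by linarith)
  have hc0 : 0 ≤ c := by
    apply div_nonneg (by linarith)
    have := Real.sqrt_nonneg q
    linarith
  have key : ∀ i ∈ Finset.univ (α := Fin n), c * ‖1 - α i‖ ≤ ‖1 - (α i)^d‖ := by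
    intro i _
    have h1 : ‖1 - α i‖ ≤ Real.sqrt q + 1 := by
      calc ‖1 - α i‖ ≤ ‖(1:ℂ)‖ + ‖α i‖ := norm_sub_le _ _
        _ = Real.sqrt q + 1 := by rw [hα i, norm_one]; ring
    have h2 : q ^ ((d:ℝ)/2) - 1 ≤ ‖1 - (α i)^d‖ := by
      have h3 : ‖(α i)^d‖ - ‖(1:ℂ)‖ ≤ ‖(α i)^d - 1‖ := norm_sub_norm_le _ _
      rw [norm_pow, hα i, norm_one, norm_sub_rev] at h3
      rw [hpow]
      linarith
    calc c * ‖1 - α i‖ ≤ c * (Real.sqrt q + 1) :=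
          mul_le_mul_of_nonneg_left h1 hc0
      _ = q ^ ((d:ℝ)/2) - 1 := by
          rw [hc]; field_simp
      _ ≤ _ := h2
  have hP : 0 < ∏ i, ‖1 - α i‖ := by
    apply Finset.prod_pos
    intro i _
    have h3 : ‖α i‖ - ‖(1:ℂ)‖ ≤ ‖α i - 1‖ := norm_sub_norm_le _ _
    rw [hα i, norm_one, norm_sub_rev] at h3
    linarith
  have hmain : c ^ n * ∏ i, ‖1 - α i‖ ≤ ∏ i, ‖1 - (α i)^d‖ := by
    have := Finset.prod_le_prod (fun i _ => mul_nonneg hc0 (norm_nonneg _)) key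
    simpa [Finset.prod_mul_distrib] using this
  rw [h] at hmain
  exact le_of_mul_le_mul_right hmain hP
end

section
/- Let q, g, g′ be natural numbers with q ≥ 5 and g′ > g, and let m be a real number with m ≥ 1 such that (√q − 1)^{2(g′ − g)} ≤ m. If g ≤ 1, then (g′ : ℝ) ≤ 1 + log(m)/(2 · log(√q − 1)) ≤ 1 + log(m)/(2 · log(√5 − 1)), where log denotes the natural logarithm. -/
open Real

/-- Part (1) of Lemma 3.1 of the paper. -/
theorem stmt_8 (q g g' : ℕ) (hq : 5 ≤ q) (hgg : g < g') (m : ℝ) (hm : 1 ≤ m)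
    (h : (Real.sqrt q - 1) ^ (2 * (g' - g)) ≤ m) (hg : g ≤ 1) :
    (g' : ℝ) ≤ 1 + Real.log m / (2 * Real.log (Real.sqrt q - 1)) ∧
    1 + Real.log m / (2 * Real.log (Real.sqrt q - 1))
      ≤ 1 + Real.log m / (2 * Real.log (Real.sqrt 5 - 1)) := by
  have hq' : (5:ℝ) ≤ q := by exact_mod_cast hq
  have h2 : (2:ℝ) < Real.sqrt 5 := by
    rw [show (2:ℝ) = Real.sqrt 4 by
      rw [show (4:ℝ) = 2^2 by norm_num, Real.sqrt_sq (by norm_num)]]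
    exact Real.sqrt_lt_sqrt (by norm_num) (by norm_num)
  have h25 : Real.sqrt 5 ≤ Real.sqrt q := Real.sqrt_le_sqrt hq'
  set s := Real.sqrt q - 1 with hs
  have hs1 : 1 < s := by simp only [hs]; linarith
  have hls : 0 < Real.log s := Real.log_pos hs1
  have hl5 : 0 < Real.log (Real.sqrt 5 - 1) := Real.log_pos (by linarith)
  have hlog : ((2*(g'-g) : ℕ) : ℝ) * Real.log s ≤ Real.log m := by
    have := Real.log_le_log (by positivity) h
    rwa [Real.log_pow] at this
  have hdg : ((g' - g : ℕ) : ℝ) ≤ Real.log m / (2 * Real.log s) := by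
    rw [le_div_iff₀ (by positivity)]
    push_cast at hlog ⊢
    linarith
  have hg'cast : (g':ℝ) ≤ 1 + ((g'-g:ℕ):ℝ) := by
    have : g' ≤ 1 + (g' - g) := by omega
    exact_mod_cast this
  have hlm : 0 ≤ Real.log m := Real.log_nonneg hm
  have hle : Real.log (Real.sqrt 5 - 1) ≤ Real.log s :=
    Real.log_le_log (by linarith) (by simp only [hs]; linarith)
  constructor
  · linarith
  · gcongr
end

section
/- Let q, g, g′, d be natural numbers with q ≥ 5, g ≥ 2, g′ > g, d ≥ 2, and let m be a real number with m ≥ 1 such that (√q − 1)^{2(g′ − g)} ≤ m and (d − 1)(g − 1) ≤ g′ − g. Then (g : ℝ) ≤ 1 + log(m)/(2(d − 1) · log(√q − 1)) and (g′ : ℝ) ≤ 1 + log(m)/log(√q − 1), where log denotes the natural logarithm. -/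
open Real

/-- Part (2) of Lemma 3.1 of the paper. -/
theorem stmt_9 (q g g' d : ℕ) (hq : 5 ≤ q) (hg : 2 ≤ g) (hgg : g < g') (hd : 2 ≤ d)
    (m : ℝ) (hm : 1 ≤ m)
    (h : (Real.sqrt q - 1) ^ (2 * (g' - g)) ≤ m)
    (hRH : (d - 1) * (g - 1) ≤ g' - g) :
    (g : ℝ) ≤ 1 + Real.log m / (2 * (d - 1) * Real.log (Real.sqrt q - 1)) ∧
    (g' : ℝ) ≤ 1 + Real.log m / Real.log (Real.sqrt q - 1) := by
  have hq5 : (5:ℝ) ≤ (q:ℝ) := by exact_mod_cast hq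
  have hs : (2:ℝ) < Real.sqrt q := by
    rw [show (2:ℝ) = Real.sqrt 4 by
      rw [show (4:ℝ) = 2^2 by norm_num, Real.sqrt_sq (by norm_num)]]
    exact Real.sqrt_lt_sqrt (by norm_num) (by linarith)
  have hb : (1:ℝ) < Real.sqrt q - 1 := by linarith
  have hL : 0 < Real.log (Real.sqrt q - 1) := Real.log_pos hb
  set L := Real.log (Real.sqrt q - 1) with hLdef
  have hgr : (2:ℝ) ≤ (g:ℝ) := by exact_mod_cast hg
  have hdr : (2:ℝ) ≤ (d:ℝ) := by exact_mod_cast hd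
  have hggr : (g:ℝ) < (g':ℝ) := by exact_mod_cast hgg
  have hcast : ((g' - g : ℕ) : ℝ) = (g':ℝ) - (g:ℝ) := by
    rw [Nat.cast_sub hgg.le]
  have hRHr : ((d:ℝ) - 1) * ((g:ℝ) - 1) ≤ (g':ℝ) - (g:ℝ) := by
    have := (Nat.cast_le (α := ℝ)).mpr hRH
    rw [Nat.cast_mul, Nat.cast_sub (by omega), Nat.cast_sub (by omega), hcast] at this
    simpa using this
  have hlogm : 2 * ((g':ℝ) - (g:ℝ)) * L ≤ Real.log m := by
    have h1 : Real.log ((Real.sqrt q - 1) ^ (2 * (g' - g))) ≤ Real.log m :=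
      Real.log_le_log (by positivity) h
    rw [Real.log_pow] at h1
    calc 2 * ((g':ℝ) - (g:ℝ)) * L = ((2 * (g' - g) : ℕ) : ℝ) * L := by
          push_cast [Nat.cast_sub hgg.le]; ring
      _ ≤ Real.log m := h1
  constructor
  · rw [← sub_le_iff_le_add', le_div_iff₀ (by nlinarith)]
    nlinarith [mul_le_mul_of_nonneg_right hRHr (by positivity : (0:ℝ) ≤ 2 * L)]
  · rw [← sub_le_iff_le_add', le_div_iff₀ hL]
    have hkey : (g':ℝ) - 1 ≤ 2 * ((g':ℝ) - (g:ℝ)) := by nlinarith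
    nlinarith [mul_le_mul_of_nonneg_right hkey hL.le]
end
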